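/- arXiv:1406.6087 — 5 statements merged into one kernel-verified Lean document; each statement's English description precedes it below -/
import Mathlib

section
/- Consider the discrete-time linear system with zero initial state x0 = 0, and let P(t) = Σ_{k=0}^{N} α_k t^k be a polynomial over F satisfying C·P(A)·A^τ·B = 0 for all natural numbers τ. Define the Markov parameters M[0] = D and M[n] = C·A^{n-1}·B for n ≥ 1, and the matrix polynomial G(z) = Σ_{k=1}^{N} (Σ_{j=k}^{N} α_j · M[j−k+1]) z^{k−1} + P(z)·M[0]. Then for every causal input u : ℤ → F^m and corresponding output y : ℤ → F^l, the difference equation (P(z)y)[n] = (G(z)u)[n] holds for all n ∈ ℤ. -/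
open Matrix Finset

/-- State sequence of the discrete-time linear system:
`x[0] = x0`, `x[n+1] = A·x[n] + B·u[n]`. -/
def stateSeq {F : Type*} [Field F] {N m : ℕ} (A : Matrix (Fin N) (Fin N) F)
    (B : Matrix (Fin N) (Fin m) F) (x0 : Fin N → F) (u : ℤ → Fin m → F) :
    ℕ → Fin N → F
  | 0 => x0
  | n + 1 => A.mulVec (stateSeq A B x0 u n) + B.mulVec (u n)

/-- Output sequence of the system: `y[n] = C·x[n] + D·u[n]` for `n ≥ 0`,
and `y[n] = 0` for `n < 0`. -/
def outSeq {F : Type*} [Field F] {N m l : ℕ} (A : Matrix (Fin N) (Fin N) F)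
    (B : Matrix (Fin N) (Fin m) F) (C : Matrix (Fin l) (Fin N) F)
    (D : Matrix (Fin l) (Fin m) F) (x0 : Fin N → F) (u : ℤ → Fin m → F)
    (n : ℤ) : Fin l → F :=
  if n < 0 then 0 else C.mulVec (stateSeq A B x0 u n.toNat) + D.mulVec (u n)

/-- The Markov parameters of the system: `M[0] = D`, `M[n] = C·A^{n-1}·B` for `n ≥ 1`. -/
def markov {F : Type*} [Field F] {N m l : ℕ} (A : Matrix (Fin N) (Fin N) F)
    (B : Matrix (Fin N) (Fin m) F) (C : Matrix (Fin l) (Fin N) F)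
    (D : Matrix (Fin l) (Fin m) F) (n : ℕ) : Matrix (Fin l) (Fin m) F :=
  if n = 0 then D else C * A ^ (n - 1) * B

section Aux

variable {F : Type*} [Field F] {N m l : ℕ} (A : Matrix (Fin N) (Fin N) F)
    (B : Matrix (Fin N) (Fin m) F) (u : ℤ → Fin m → F)

lemma my_sum_mulVec {ι : Type*} (s : Finset ι) (M : ι → Matrix (Fin l) (Fin N) F)
    (v : Fin N → F) : (∑ i ∈ s, M i).mulVec v = ∑ i ∈ s, (M i).mulVec v := by
  induction s using Finset.cons_induction with
  | empty => simp [Matrix.zero_mulVec]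
  | cons a s ha ih => simp [Matrix.add_mulVec, ih]

lemma my_mulVec_sum {ι : Type*} (s : Finset ι) (M : Matrix (Fin l) (Fin N) F)
    (v : ι → Fin N → F) : M.mulVec (∑ i ∈ s, v i) = ∑ i ∈ s, M.mulVec (v i) := by
  induction s using Finset.cons_induction with
  | empty => simp
  | cons a s ha ih => simp [Matrix.mulVec_add, ih]

lemma aux1 (M : Matrix (Fin l) (Fin N) F) (hM : ∀ τ : ℕ, M * A ^ τ * B = 0) :
    ∀ n : ℕ, M.mulVec (stateSeq A B 0 u n) = 0 := by
  intro n
  induction n generalizing M with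
  | zero => simp [stateSeq]
  | succ n ih =>
    have h1 : M.mulVec (A.mulVec (stateSeq A B 0 u n)) = 0 := by
      rw [Matrix.mulVec_mulVec]
      exact ih (M * A) (fun τ => by
        have := hM (τ + 1)
        rw [pow_succ', ← Matrix.mul_assoc] at this
        exact this)
    have h2 : M.mulVec (B.mulVec (u n)) = 0 := by
      rw [Matrix.mulVec_mulVec]
      have hMB : M * B = 0 := by simpa using hM 0
      rw [hMB, Matrix.zero_mulVec]
    simp [stateSeq, Matrix.mulVec_add, h1, h2]

noncomputable def Xext (t : ℤ) : Fin N → F :=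
  if t < 0 then 0 else stateSeq A B 0 u t.toNat

lemma Xext_rec (hu : ∀ n : ℤ, n < 0 → u n = 0) (t : ℤ) :
    Xext A B u (t + 1) = A.mulVec (Xext A B u t) + B.mulVec (u t) := by
  unfold Xext
  rcases lt_trichotomy t 0 with ht | ht | ht
  · rw [if_pos ht, hu t ht]
    rcases lt_or_ge (t + 1) 0 with h | h
    · rw [if_pos h]; simp
    · have : (t + 1).toNat = 0 := by omega
      rw [if_neg (by omega), this]
      simp [stateSeq]
  · subst ht
    simp only [if_neg (by omega : ¬ (0:ℤ) + 1 < 0), if_neg (lt_irrefl (0:ℤ))]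
    norm_num
    rfl
  · rw [if_neg (by omega), if_neg (by omega)]
    have h1 : (t + 1).toNat = t.toNat + 1 := by omega
    rw [h1]
    show A.mulVec (stateSeq A B 0 u t.toNat) + B.mulVec (u t.toNat) = _
    rw [Int.toNat_of_nonneg (by omega)]

lemma Xext_formula (hu : ∀ n : ℤ, n < 0 → u n = 0) (k : ℕ) (t : ℤ) :
    Xext A B u (t + k) = (A ^ k).mulVec (Xext A B u t) +
      ∑ i ∈ range k, (A ^ (k - 1 - i) * B).mulVec (u (t + i)) := by
  induction k with
  | zero => simp
  | succ k ih =>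
    have : t + (k + 1 : ℕ) = (t + k) + 1 := by push_cast; ring
    rw [this, Xext_rec A B u hu, ih, Matrix.mulVec_add, Matrix.mulVec_mulVec,
      ← pow_succ', Finset.sum_range_succ]
    have h0 : (k + 1 - 1 - k : ℕ) = 0 := by omega
    rw [h0, pow_zero, Matrix.one_mul, my_mulVec_sum]
    have hterm : ∀ i ∈ range k,
        A.mulVec ((A ^ (k - 1 - i) * B).mulVec (u (t + i)))
          = (A ^ (k + 1 - 1 - i) * B).mulVec (u (t + i)) := by
      intro i hi
      have hik : i < k := Finset.mem_range.mp hi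
      rw [Matrix.mulVec_mulVec, ← Matrix.mul_assoc, ← pow_succ']
      have he : k - 1 - i + 1 = k + 1 - 1 - i := by omega
      rw [he]
    rw [Finset.sum_congr rfl hterm]
    abel

end Aux

/-- with zero initial state and a polynomial
`P(t) = Σ_{k=0}^{N} α_k t^k` satisfying `C·P(A)·A^τ·B = 0` for all `τ`, the
difference equation `(P(z)y)[n] = (G(z)u)[n]` holds for every causal input `u`
and all `n ∈ ℤ`, where
`G(z) = Σ_{k=1}^{N} (Σ_{j=k}^{N} α_j·M[j−k+1]) z^{k−1} + P(z)·M[0]`. -/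


theorem stmt6 {F : Type*} [Field F] {N m l : ℕ} (A : Matrix (Fin N) (Fin N) F)
    (B : Matrix (Fin N) (Fin m) F) (C : Matrix (Fin l) (Fin N) F)
    (D : Matrix (Fin l) (Fin m) F) (α : ℕ → F)
    (hP : ∀ τ : ℕ, C * (∑ k ∈ Finset.range (N + 1), α k • A ^ k) * A ^ τ * B = 0)
    (u : ℤ → Fin m → F) (hu : ∀ n : ℤ, n < 0 → u n = 0) (n : ℤ) :
    ∑ k ∈ Finset.range (N + 1), α k • outSeq A B C D 0 u (n + k) =
      (∑ k ∈ Finset.Icc 1 N,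
        (∑ j ∈ Finset.Icc k N, α j • markov A B C D (j - k + 1)).mulVec (u (n + k - 1)))
      + ∑ k ∈ Finset.range (N + 1), α k • (markov A B C D 0).mulVec (u (n + k)) := by
  have hy : ∀ t : ℤ, outSeq A B C D 0 u t = C.mulVec (Xext A B u t) + D.mulVec (u t) := by
    intro t
    unfold outSeq Xext
    by_cases ht : t < 0
    · rw [if_pos ht, if_pos ht, hu t ht]
      simp
    · rw [if_neg ht, if_neg ht]
  set P : Matrix (Fin N) (Fin N) F := ∑ k ∈ Finset.range (N + 1), α k • A ^ k with hPdef
  have hX0 : (C * P).mulVec (Xext A B u n) = 0 := by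
    unfold Xext
    by_cases hn : n < 0
    · rw [if_pos hn]; simp
    · rw [if_neg hn]; exact aux1 A B u (C * P) hP n.toNat
  have key : ∀ k : ℕ, α k • outSeq A B C D 0 u (n + k)
      = α k • (C * A ^ k).mulVec (Xext A B u n)
        + (∑ i ∈ Finset.range k, α k • (C * (A ^ (k - 1 - i) * B)).mulVec (u (n + i)))
        + α k • D.mulVec (u (n + k)) := by
    intro k
    rw [hy, Xext_formula A B u hu k n, Matrix.mulVec_add, my_mulVec_sum, smul_add, smul_add,
      Finset.smul_sum]
    congr 2
    · rw [Matrix.mulVec_mulVec]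
    · exact Finset.sum_congr rfl fun i _ => by rw [Matrix.mulVec_mulVec]
  have hfirst : ∑ k ∈ Finset.range (N + 1), α k • (C * A ^ k).mulVec (Xext A B u n) = 0 := by
    have h : ∑ k ∈ Finset.range (N + 1), α k • (C * A ^ k).mulVec (Xext A B u n)
        = (C * P).mulVec (Xext A B u n) := by
      rw [hPdef, Matrix.mul_sum, my_sum_mulVec]
      exact Finset.sum_congr rfl fun k _ => by
        rw [Matrix.mul_smul, Matrix.smul_mulVec]
    rw [h, hX0]
  have hre : (∑ k ∈ Finset.range (N + 1), ∑ i ∈ Finset.range k,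
        α k • (C * (A ^ (k - 1 - i) * B)).mulVec (u (n + i)))
      = ∑ k ∈ Finset.Icc 1 N,
        (∑ j ∈ Finset.Icc k N, α j • markov A B C D (j - k + 1)).mulVec (u (n + k - 1)) := by
    have hr : ∀ k ∈ Finset.Icc 1 N,
        (∑ j ∈ Finset.Icc k N, α j • markov A B C D (j - k + 1)).mulVec (u (n + k - 1))
        = ∑ j ∈ Finset.Icc k N, α j • (markov A B C D (j - k + 1)).mulVec (u (n + k - 1)) := by
      intro k _
      rw [my_sum_mulVec]
      exact Finset.sum_congr rfl fun j _ => Matrix.smul_mulVec _ _ _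
    rw [Finset.sum_congr rfl hr, Finset.sum_sigma', Finset.sum_sigma']
    refine Finset.sum_nbij' (fun p => ⟨p.2 + 1, p.1⟩) (fun p => ⟨p.2, p.1 - 1⟩) ?_ ?_ ?_ ?_ ?_
    · intro a ha
      obtain ⟨k, i⟩ := a
      dsimp only
      simp only [Finset.mem_sigma, Finset.mem_range, Finset.mem_Icc] at ha ⊢
      omega
    · intro a ha
      obtain ⟨k, j⟩ := a
      dsimp only
      simp only [Finset.mem_sigma, Finset.mem_range, Finset.mem_Icc] at ha ⊢
      omega
    · intro a ha
      obtain ⟨k, i⟩ := a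
      simp
    · intro a ha
      obtain ⟨k, j⟩ := a
      dsimp only
      simp only [Finset.mem_sigma, Finset.mem_Icc] at ha
      have hk : k - 1 + 1 = k := by omega
      simp [hk]
    · intro a ha
      obtain ⟨k, i⟩ := a
      dsimp only
      simp only [Finset.mem_sigma, Finset.mem_range] at ha
      have hik : i < k := ha.2
      have h1 : ¬ (k - (i + 1) + 1 = 0) := by omega
      rw [markov, if_neg h1]
      have h2 : k - (i + 1) + 1 - 1 = k - 1 - i := by omega
      rw [h2, Matrix.mul_assoc]
      have h3 : n + ((i + 1 : ℕ) : ℤ) - 1 = n + (i : ℤ) := by push_cast; ring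
      rw [h3]
  calc ∑ k ∈ Finset.range (N + 1), α k • outSeq A B C D 0 u (n + k)
      = ∑ k ∈ Finset.range (N + 1),
          (α k • (C * A ^ k).mulVec (Xext A B u n)
            + (∑ i ∈ Finset.range k, α k • (C * (A ^ (k - 1 - i) * B)).mulVec (u (n + i)))
            + α k • D.mulVec (u (n + k))) := Finset.sum_congr rfl fun k _ => key k
    _ = (∑ k ∈ Finset.range (N + 1), α k • (C * A ^ k).mulVec (Xext A B u n))
        + (∑ k ∈ Finset.range (N + 1), ∑ i ∈ Finset.range k,
            α k • (C * (A ^ (k - 1 - i) * B)).mulVec (u (n + i)))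
        + ∑ k ∈ Finset.range (N + 1), α k • D.mulVec (u (n + k)) := by
          rw [Finset.sum_add_distrib, Finset.sum_add_distrib]
    _ = _ := by
          rw [hfirst, hre, zero_add]
          have hm0 : markov A B C D 0 = D := by simp [markov]
          rw [hm0]
end

section
/- Let G be an l×m matrix with entries in the polynomial ring F[z] over a field F. The map sending a causal sequence u : ℤ → F^m (u[n] = 0 for n < 0) to the sequence G(z)u is injective if and only if the m columns of G are linearly independent over F[z] (i.e., G has full column rank over F[z]). In particular, if the columns are linearly dependent, there exists a non-zero causal sequence u with (G(z)u)[n] = 0 for all n. -/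
open Polynomial Finset Matrix

/-- The action of the time-shift operator of a polynomial matrix `G(z)` on a
vector-valued sequence: `(G(z)u)[n]_i = Σ_j Σ_k (G i j).coeff k * u[n+k]_j`. -/
def matShift {F : Type*} [Field F] {p q : ℕ} (G : Matrix (Fin p) (Fin q) (Polynomial F))
    (u : ℤ → Fin q → F) (n : ℤ) : Fin p → F :=
  fun i => ∑ j, (G i j).sum fun k a => a * u (n + k) j

/-- `cInt q t` is the coefficient of `q` at integer index `t` (zero for `t < 0`). -/
private def cInt {F : Type*} [Field F] (q : Polynomial F) (t : ℤ) : F :=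
  if 0 ≤ t then q.coeff t.toNat else 0

private lemma cInt_ofNat {F : Type*} [Field F] (q : Polynomial F) (T : ℕ) :
    cInt q (T : ℤ) = q.coeff T := by
  simp [cInt]

private lemma cInt_sum {F : Type*} [Field F] {ι : Type*} (s : Finset ι)
    (f : ι → Polynomial F) (t : ℤ) :
    cInt (∑ j ∈ s, f j) t = ∑ j ∈ s, cInt (f j) t := by
  unfold cInt
  split
  · simp [Polynomial.finset_sum_coeff]
  · simp

private lemma cInt_mul {F : Type*} [Field F] (a b : Polynomial F) {M : ℕ}
    (ha : a.natDegree < M) (t : ℤ) :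
    cInt (a * b) t = ∑ k ∈ Finset.range M, a.coeff k * cInt b (t - k) := by
  rcases lt_or_ge t 0 with ht | ht
  · rw [cInt, if_neg (not_le.2 ht)]
    refine (Finset.sum_eq_zero fun k hk => ?_).symm
    rw [cInt, if_neg (by omega), mul_zero]
  · obtain ⟨T, rfl⟩ := Int.eq_ofNat_of_zero_le ht
    rw [cInt, if_pos ht, Int.toNat_natCast, Polynomial.coeff_mul,
      Finset.Nat.sum_antidiagonal_eq_sum_range_succ_mk]
    have key : ∀ k ∈ Finset.range (T + 1), a.coeff k * b.coeff (T - k)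
        = a.coeff k * cInt b ((T : ℤ) - k) := by
      intro k hk
      rw [Finset.mem_range] at hk
      have h1 : (0 : ℤ) ≤ (T : ℤ) - k := by omega
      have h2 : ((T : ℤ) - k).toNat = T - k := by omega
      rw [cInt, if_pos h1, h2]
    rw [Finset.sum_congr rfl key]
    trans ∑ k ∈ Finset.range (M + T + 1), a.coeff k * cInt b ((T : ℤ) - k)
    · refine Finset.sum_subset (by intro x hx; simp at hx ⊢; omega) ?_
      intro k hk hk'
      simp only [Finset.mem_range] at hk hk'
      rw [cInt, if_neg (by omega), mul_zero]
    · refine (Finset.sum_subset (by intro x hx; simp at hx ⊢; omega) ?_).symm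
      intro k hk hk'
      simp only [Finset.mem_range] at hk hk'
      rw [Polynomial.coeff_eq_zero_of_natDegree_lt (by omega), zero_mul]

private lemma matShift_range {F : Type*} [Field F] {l m M : ℕ}
    (G : Matrix (Fin l) (Fin m) (Polynomial F))
    (hM : ∀ i j, (G i j).natDegree < M) (u : ℤ → Fin m → F) (n : ℤ) (i : Fin l) :
    matShift G u n i = ∑ j, ∑ k ∈ Finset.range M, (G i j).coeff k * u (n + k) j := by
  unfold matShift
  refine Finset.sum_congr rfl fun j _ => ?_
  exact Polynomial.sum_over_range' (G i j) (f := fun k a => a * u (n + k) j)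
    (fun _ => zero_mul _) M (hM i j)

/-- From a linear dependence among the columns, a non-zero causal kernel sequence. -/
private lemma depToSeq {F : Type*} [Field F] {l m : ℕ}
    (G : Matrix (Fin l) (Fin m) (Polynomial F))
    (hdep : ¬ LinearIndependent (Polynomial F) (fun j : Fin m => G.transpose j)) :
    ∃ u : ℤ → Fin m → F, (∀ n : ℤ, n < 0 → u n = 0) ∧ u ≠ 0 ∧
      ∀ n : ℤ, matShift G u n = 0 := by
  classical
  obtain ⟨g, hsum, j0, hj0⟩ := Fintype.not_linearIndependent_iff.mp hdep
  set M : ℕ := (Finset.univ.sup fun ij : Fin l × Fin m => (G ij.1 ij.2).natDegree) + 1 with hMdef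
  have hM : ∀ i j, (G i j).natDegree < M := by
    intro i j
    have h1 : (G i j).natDegree
        ≤ Finset.univ.sup fun ij : Fin l × Fin m => (G ij.1 ij.2).natDegree :=
      Finset.le_sup (f := fun ij : Fin l × Fin m => (G ij.1 ij.2).natDegree)
        (Finset.mem_univ (i, j))
    omega
  set D : ℕ := Finset.univ.sup fun j => (g j).natDegree with hDdef
  have hD : ∀ j, (g j).natDegree ≤ D := fun j =>
    Finset.le_sup (f := fun j => (g j).natDegree) (Finset.mem_univ j)
  refine ⟨fun n j => cInt (g j) ((D : ℤ) - n), ?_, ?_, ?_⟩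
  · intro n hn
    funext j
    have h1 : (0 : ℤ) ≤ (D : ℤ) - n := by omega
    have h2 : (g j).natDegree < ((D : ℤ) - n).toNat := by have := hD j; omega
    simp only [cInt, if_pos h1]
    exact Polynomial.coeff_eq_zero_of_natDegree_lt h2
  · intro h0
    have h1 := congrFun (congrFun h0 ((D : ℤ) - (g j0).natDegree)) j0
    have h2 : (D : ℤ) - ((D : ℤ) - (g j0).natDegree) = ((g j0).natDegree : ℤ) := by ring
    rw [h2, cInt_ofNat] at h1
    exact (Polynomial.leadingCoeff_ne_zero.mpr hj0) h1
  · intro n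
    funext i
    have hG : ∑ j, G i j * g j = 0 := by
      have h1 := congrFun hsum i
      simpa only [Finset.sum_apply, Pi.smul_apply, Matrix.transpose_apply,
        smul_eq_mul, Pi.zero_apply, mul_comm] using h1
    rw [matShift_range G hM]
    have key : ∀ j : Fin m, ∑ k ∈ Finset.range M,
        (G i j).coeff k * cInt (g j) ((D : ℤ) - (n + k))
        = cInt (G i j * g j) ((D : ℤ) - n) := by
      intro j
      rw [cInt_mul (G i j) (g j) (hM i j)]
      refine Finset.sum_congr rfl fun k _ => ?_
      congr 2
      ring
    simp only [key]
    rw [← cInt_sum, hG]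
    simp [cInt]

/-- From a non-zero causal kernel sequence, a linear dependence among the columns. -/
private lemma seqToDep {F : Type*} [Field F] {l m : ℕ}
    (G : Matrix (Fin l) (Fin m) (Polynomial F)) (w : ℤ → Fin m → F)
    (hcaus : ∀ n : ℤ, n < 0 → w n = 0) (hne : w ≠ 0)
    (hker : ∀ n : ℤ, matShift G w n = 0) :
    ¬ LinearIndependent (Polynomial F) (fun j : Fin m => G.transpose j) := by
  classical
  set M : ℕ := (Finset.univ.sup fun ij : Fin l × Fin m => (G ij.1 ij.2).natDegree) + 1 with hMdef
  have hM : ∀ i j, (G i j).natDegree < M := by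
    intro i j
    have h1 : (G i j).natDegree
        ≤ Finset.univ.sup fun ij : Fin l × Fin m => (G ij.1 ij.2).natDegree :=
      Finset.le_sup (f := fun ij : Fin l × Fin m => (G ij.1 ij.2).natDegree)
        (Finset.mem_univ (i, j))
    omega
  -- minimal support point of w
  have hex : ∃ n : ℕ, w n ≠ 0 := by
    obtain ⟨n0, hn0⟩ : ∃ n0, w n0 ≠ 0 := by
      by_contra h; push_neg at h; exact hne (funext h)
    have h0 : 0 ≤ n0 := by
      by_contra h; exact hn0 (hcaus n0 (by omega))
    exact ⟨n0.toNat, by rwa [Int.toNat_of_nonneg h0]⟩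
  set N : ℕ := Nat.find hex with hNdef
  have hN : w (N : ℤ) ≠ 0 := Nat.find_spec hex
  have hmin : ∀ t : ℤ, t < (N : ℤ) → w t = 0 := by
    intro t ht
    rcases lt_or_ge t 0 with h | h
    · exact hcaus t h
    · have h1 : t = ((t.toNat : ℕ) : ℤ) := by omega
      rw [h1]
      by_contra h2
      exact (Nat.find_min hex (by omega)) h2
  obtain ⟨j0, hj0⟩ : ∃ j0, w (N : ℤ) j0 ≠ 0 := by
    by_contra h; push_neg at h; exact hN (funext h)
  -- reversed truncations of w and their images under G
  set P : ℕ → Fin m → Polynomial F :=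
    fun D j => ∑ k ∈ Finset.range (D + 1), Polynomial.monomial k (w ((D : ℤ) - k) j) with hPdef
  have coeffP : ∀ (D : ℕ) (j : Fin m) (k : ℕ), (P D j).coeff k = w ((D : ℤ) - k) j := by
    intro D j k
    rw [hPdef]
    simp only [Polynomial.finset_sum_coeff, Polynomial.coeff_monomial]
    rcases le_or_gt k D with h | h
    · rw [Finset.sum_eq_single k (fun b _ hb => if_neg hb)
        (fun h' => absurd (Finset.mem_range.mpr (by omega)) h')]
      simp
    · rw [Finset.sum_eq_zero (fun b hb => if_neg (by simp at hb; omega)),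
        hmin ((D : ℤ) - k) (by omega)]
      simp
  set Q : ℕ → Fin l → Polynomial F := fun D i => ∑ j, G i j * P D j with hQdef
  have coeffQ_hi : ∀ (D : ℕ) (i : Fin l) (T : ℕ), M ≤ T → (Q D i).coeff T = 0 := by
    intro D i T hT
    rw [← cInt_ofNat, hQdef]
    rw [cInt_sum]
    have key : ∀ j : Fin m, cInt (G i j * P D j) (T : ℤ)
        = ∑ k ∈ Finset.range M, (G i j).coeff k * w (((D : ℤ) - T) + k) j := by
      intro j
      rw [cInt_mul (G i j) (P D j) (hM i j)]
      refine Finset.sum_congr rfl fun k hk => ?_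
      rw [Finset.mem_range] at hk
      have h1 : (0 : ℤ) ≤ (T : ℤ) - k := by omega
      rw [cInt, if_pos h1, coeffP]
      congr 2
      omega
    simp only [key]
    rw [← matShift_range G hM w ((D : ℤ) - T) i, hker ((D : ℤ) - T)]
    rfl
  -- the coefficient vectors of the Q's live in an (l*M)-dimensional space
  set v : Fin (l * M + 1) → (Fin l × Fin M → F) :=
    fun d ik => (Q (N + d.val) ik.1).coeff ik.2.val with hvdef
  have hnli : ¬ LinearIndependent F v := by
    intro hli
    have h1 := hli.fintype_card_le_finrank
    rw [Module.finrank_fintype_fun_eq_card] at h1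
    simp only [Fintype.card_fin, Fintype.card_prod] at h1
    omega
  obtain ⟨g, hgsum, d1, hd1⟩ := Fintype.not_linearIndependent_iff.mp hnli
  -- maximal index with nonzero coefficient
  have hSne : (Finset.univ.filter (fun d => g d ≠ 0)).Nonempty :=
    ⟨d1, Finset.mem_filter.mpr ⟨Finset.mem_univ d1, hd1⟩⟩
  set d0 : Fin (l * M + 1) := (Finset.univ.filter (fun d => g d ≠ 0)).max' hSne with hd0def
  have hd0 : g d0 ≠ 0 := by
    have h1 := Finset.max'_mem _ hSne
    rw [Finset.mem_filter] at h1
    exact h1.2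
  have hmax : ∀ d, g d ≠ 0 → d ≤ d0 := fun d hd =>
    Finset.le_max' _ d (Finset.mem_filter.mpr ⟨Finset.mem_univ d, hd⟩)
  -- the dependence witness
  set Pf : Fin m → Polynomial F :=
    fun j => ∑ d, Polynomial.C (g d) * P (N + d.val) j with hPfdef
  rw [Fintype.not_linearIndependent_iff]
  refine ⟨Pf, ?_, j0, ?_⟩
  · funext i
    simp only [Finset.sum_apply, Pi.smul_apply, Matrix.transpose_apply, smul_eq_mul,
      Pi.zero_apply]
    have h1 : ∑ j, Pf j * G i j = ∑ d, Polynomial.C (g d) * Q (N + d.val) i := by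
      simp only [hPfdef, hQdef, Finset.sum_mul, Finset.mul_sum]
      rw [Finset.sum_comm]
      exact Finset.sum_congr rfl fun d _ => Finset.sum_congr rfl fun j _ => by ring
    rw [h1]
    refine Polynomial.ext fun k => ?_
    simp only [Polynomial.finset_sum_coeff, Polynomial.coeff_C_mul, Polynomial.coeff_zero]
    rcases lt_or_ge k M with hk | hk
    · have h2 := congrFun hgsum (i, ⟨k, hk⟩)
      simpa only [Finset.sum_apply, Pi.smul_apply, smul_eq_mul, Pi.zero_apply, hvdef]
        using h2
    · exact Finset.sum_eq_zero fun d _ => by rw [coeffQ_hi _ _ _ hk, mul_zero]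
  · intro h0
    have h1 : (Pf j0).coeff d0.val = g d0 * w (N : ℤ) j0 := by
      rw [hPfdef]
      simp only [Polynomial.finset_sum_coeff, Polynomial.coeff_C_mul]
      rw [Finset.sum_eq_single d0]
      · have harg : ((N + d0.val : ℕ) : ℤ) - (d0.val : ℤ) = (N : ℤ) := by omega
        rw [coeffP, harg]
      · intro d _ hd
        rcases lt_or_ge d0 d with h | h
        · rw [not_imp_comm.mp (hmax d) (not_le.mpr h), zero_mul]
        · have hdlt : d.val < d0.val := lt_of_le_of_ne h (fun hc => hd (Fin.ext hc))
          rw [coeffP, hmin _ (by push_cast; omega)]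
          simp
      · intro h; exact absurd (Finset.mem_univ d0) h
    rw [h0] at h1
    simp only [Polynomial.coeff_zero] at h1
    rcases mul_eq_zero.mp h1.symm with h | h
    · exact hd0 h
    · exact hj0 h

/-- the map `u ↦ G(z)u` on causal sequences is injective iff the
columns of `G` are linearly independent over `F[z]`; in particular, if the
columns are linearly dependent then some non-zero causal sequence is mapped to
the zero sequence. -/
theorem stmt9 {F : Type*} [Field F] {l m : ℕ}
    (G : Matrix (Fin l) (Fin m) (Polynomial F)) :
    ((∀ u v : ℤ → Fin m → F, (∀ n : ℤ, n < 0 → u n = 0) → (∀ n : ℤ, n < 0 → v n = 0) →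
        (∀ n : ℤ, matShift G u n = matShift G v n) → u = v) ↔
      LinearIndependent (Polynomial F) (fun j : Fin m => G.transpose j)) ∧
    (¬ LinearIndependent (Polynomial F) (fun j : Fin m => G.transpose j) →
      ∃ u : ℤ → Fin m → F, (∀ n : ℤ, n < 0 → u n = 0) ∧ u ≠ 0 ∧
        ∀ n : ℤ, matShift G u n = 0) := by
  constructor
  · constructor
    · intro hinj
      by_contra hdep
      obtain ⟨u, hcaus, hne, hker⟩ := depToSeq G hdep
      refine hne (hinj u 0 hcaus (fun _ _ => rfl) fun n => ?_)
      rw [hker n]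
      funext i
      simp [matShift, Polynomial.sum]
    · intro hli u v hu hv heq
      by_contra hne
      have hwne : u - v ≠ 0 := sub_ne_zero.mpr hne
      refine seqToDep G (u - v) (fun n hn => by rw [Pi.sub_apply, hu n hn, hv n hn, sub_zero])
        hwne (fun n => ?_) hli
      funext i
      have h1 := congrFun (heq n) i
      simp only [matShift, Pi.sub_apply, Pi.zero_apply]
      simp only [matShift] at h1
      rw [← sub_eq_zero] at h1
      rw [← h1, ← Finset.sum_sub_distrib]
      refine Finset.sum_congr rfl fun j _ => ?_
      rw [Polynomial.sum_def, Polynomial.sum_def, Polynomial.sum_def, ← Finset.sum_sub_distrib]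
      exact Finset.sum_congr rfl fun k _ => by ring
  · exact depToSeq G
end

section
/- Consider the discrete-time linear system with arbitrary initial state x0 ∈ F^N and pilot input u[n] = Σ_{k=1}^{m} e_k·1{n = (2N+1)k}, with output sequence y. Then scalars α_0, ..., α_N ∈ F satisfy Σ_{j=0}^{N} α_j · y[j+τ] = 0 for every τ of the form τ = (2N+1)p + τ̃ with 0 ≤ p ≤ m and 1 ≤ τ̃ ≤ N, if and only if the polynomial P(t) = Σ_{k=0}^{N} α_k t^k satisfies both C·P(A)·A^τ·B = 0 for all natural numbers τ and C·P(A)·A^{τ+1}·x0 = 0 for all natural numbers τ. -/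
open Matrix Finset

/-- The pilot input sequence of Algorithm 2:
`u[n] = Σ_{k=1}^{m} e_k · 1{n = (2N+1)k}`. -/
def pilot (F : Type*) [Field F] (N m : ℕ) : ℤ → Fin m → F := fun n =>
  ∑ k : Fin m, if n = ((2 * N + 1) * ((k : ℕ) + 1) : ℕ) then Pi.single k 1 else 0

/-!
Set `z p := x[(2N+1)p + 1]`, the state just after the `p`-th pilot spike. Between spikes the
system runs freely, so `Σ_j α_j y[(2N+1)p + i + 1 + j] = C·P(A)·A^i·z p` for `i < N`, and by
Cayley–Hamilton the vanishing of these `N` values is equivalent to `C·P(A)·A^τ·z p = 0` for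
all `τ`. Since `z 0 = A·x0` and `z (p+1) = A^(2N+1)·z p + B·e_p`, these conditions for `p ≤ m`
unwind exactly into `C·P(A)·A^(τ+1)·x0 = 0` and `C·P(A)·A^τ·B = 0`.
-/

section CayleyHamilton

variable {R W n : Type*} [CommRing R] [Nontrivial R] [Fintype n] [DecidableEq n]
  [AddCommGroup W] [Module R W]

theorem map_pow_eq_zero_of_forall_lt_card (A : Matrix n n R) (f : Matrix n n R →ₗ[R] W)
    (h : ∀ i < Fintype.card n, f (A ^ i) = 0) (k : ℕ) : f (A ^ k) = 0 := by
  rw [pow_eq_aeval_mod_charpoly, Polynomial.aeval_eq_sum_range, map_sum]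
  refine sum_eq_zero fun i _ => ?_
  rw [map_smul]
  rcases lt_or_ge i (Fintype.card n) with hi | hi
  · rw [h i hi, smul_zero]
  · rw [Polynomial.coeff_eq_zero_of_degree_lt, zero_smul]
    calc (Polynomial.X ^ k %ₘ A.charpoly).degree < A.charpoly.degree :=
          Polynomial.degree_modByMonic_lt _ (charpoly_monic A)
      _ = Fintype.card n := charpoly_degree_eq_dim A
      _ ≤ i := by exact_mod_cast hi

theorem forall_mul_pow_mulVec_eq_zero_iff_forall_lt_card {l : Type*}
    (Q : Matrix l n R) (A : Matrix n n R) (v : n → R) :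
    (∀ k, (Q * A ^ k) *ᵥ v = 0) ↔ ∀ i < Fintype.card n, (Q * A ^ i) *ᵥ v = 0 := by
  refine ⟨fun h i _ => h i, fun h => ?_⟩
  let f : Matrix n n R →ₗ[R] l → R :=
    { toFun := fun X => (Q * X) *ᵥ v
      map_add' := fun X Y => by rw [Matrix.mul_add, add_mulVec]
      map_smul' := fun c X => by rw [Matrix.mul_smul, smul_mulVec]; rfl }
  exact map_pow_eq_zero_of_forall_lt_card A f h

end CayleyHamilton

theorem Matrix.mul_pow_mulVec_pow_mulVec {R l n : Type*} [Semiring R] [Fintype n]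
    [DecidableEq n] (Q : Matrix l n R) (A : Matrix n n R) (i j : ℕ) (v : n → R) :
    (Q * A ^ i) *ᵥ (A ^ j *ᵥ v) = (Q * A ^ (i + j)) *ᵥ v := by
  rw [mulVec_mulVec, Matrix.mul_assoc, pow_add]

theorem forall_mul_pow_mulVec_eq_zero_iff_of_recurrence {R l n : Type*} [Semiring R] [Fintype n]
    [DecidableEq n] (Q : Matrix l n R) (A : Matrix n n R) (r m : ℕ) (z b : ℕ → n → R)
    (hz : ∀ p < m, z (p + 1) = A ^ r *ᵥ z p + b p) :
    (∀ p ≤ m, ∀ τ : ℕ, (Q * A ^ τ) *ᵥ z p = 0) ↔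
      (∀ τ : ℕ, (Q * A ^ τ) *ᵥ z 0 = 0) ∧
        ∀ p < m, ∀ τ : ℕ, (Q * A ^ τ) *ᵥ b p = 0 := by
  constructor
  · intro h
    refine ⟨h 0 (Nat.zero_le m), fun p hp τ => ?_⟩
    have hnext := h (p + 1) hp τ
    rwa [hz p hp, mulVec_add, Matrix.mul_pow_mulVec_pow_mulVec, h p hp.le, zero_add] at hnext
  · rintro ⟨h0, hb⟩ p hp
    induction p with
    | zero => exact h0
    | succ p ih =>
      intro τ
      rw [hz p hp, mulVec_add, Matrix.mul_pow_mulVec_pow_mulVec, ih (Nat.le_of_succ_le hp),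
        zero_add, hb p hp]

section LinearSystem

variable {F : Type*} [Field F] {N m l : ℕ} (A : Matrix (Fin N) (Fin N) F)
  (B : Matrix (Fin N) (Fin m) F) (C : Matrix (Fin l) (Fin N) F)
  (D : Matrix (Fin l) (Fin m) F) (x0 : Fin N → F) (u : ℤ → Fin m → F)

theorem outSeq_natCast (n : ℕ) :
    outSeq A B C D x0 u n = C *ᵥ stateSeq A B x0 u n + D *ᵥ u n := by
  simp [outSeq]

theorem stateSeq_add_of_forall_lt {n j : ℕ} (hu : ∀ i < j, u (n + i : ℕ) = 0) :
    stateSeq A B x0 u (n + j) = A ^ j *ᵥ stateSeq A B x0 u n := by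
  induction j with
  | zero => simp
  | succ j ih =>
    rw [← add_assoc, stateSeq, hu j j.lt_succ_self, mulVec_zero, add_zero,
      ih fun i hi => hu i (hi.trans j.lt_succ_self), mulVec_mulVec, ← pow_succ']

theorem sum_smul_outSeq_of_forall_le (α : ℕ → F) {n d : ℕ}
    (hu : ∀ j ≤ d, u (n + j : ℕ) = 0) :
    ∑ j ∈ range (d + 1), α j • outSeq A B C D x0 u (n + j : ℕ) =
      (C * ∑ k ∈ range (d + 1), α k • A ^ k) *ᵥ stateSeq A B x0 u n := by
  rw [Matrix.mul_sum, sum_mulVec]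
  refine sum_congr rfl fun j hj => ?_
  have hj : j ≤ d := Nat.lt_succ_iff.mp (mem_range.mp hj)
  rw [outSeq_natCast, hu j hj, mulVec_zero, add_zero,
    stateSeq_add_of_forall_lt A B x0 u fun i hi => hu i (hi.le.trans hj), mulVec_mulVec,
    Matrix.mul_smul, smul_mulVec]

end LinearSystem

section Pilot

variable {F : Type*} [Field F] {N m : ℕ}

theorem pilot_eq_zero_of_forall_ne {n : ℕ} (h : ∀ k < m, n ≠ (2 * N + 1) * (k + 1)) :
    pilot F N m n = 0 :=
  sum_eq_zero fun k _ => if_neg fun hk => h k k.isLt (by exact_mod_cast hk)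

theorem pilot_eq_zero_of_lt_of_le (p : ℕ) {n : ℕ} (h₁ : (2 * N + 1) * p < n)
    (h₂ : n ≤ (2 * N + 1) * p + 2 * N) : pilot F N m n = 0 := by
  refine pilot_eq_zero_of_forall_ne fun k _ hk => ?_
  subst hk
  have hlo : p < k + 1 := Nat.lt_of_mul_lt_mul_left h₁
  have hhi : k + 1 < p + 1 :=
    Nat.lt_of_mul_lt_mul_left (a := 2 * N + 1) (by simp only [Nat.mul_succ] at h₂ ⊢; omega)
  omega

theorem pilot_mul_succ (k : Fin m) :
    pilot F N m ((2 * N + 1) * (k + 1) : ℕ) = Pi.single k 1 := by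
  have hinj : ∀ k' : Fin m,
      (((2 * N + 1) * (k + 1) : ℕ) : ℤ) = ((2 * N + 1) * (k' + 1) : ℕ) ↔ k = k' := by
    intro k'
    rw [Nat.cast_inj, Nat.mul_right_inj (by omega), Nat.add_right_cancel_iff, Fin.val_inj]
  simp only [pilot, hinj, sum_ite_eq, mem_univ, if_true]

theorem pilot_zero : pilot F N m 0 = 0 :=
  pilot_eq_zero_of_forall_ne (n := 0) fun k _ => (Nat.mul_pos (by omega) k.succ_pos).ne

end Pilot

section PilotResponse

variable {F : Type*} [Field F] {N m l : ℕ} (A : Matrix (Fin N) (Fin N) F)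
  (B : Matrix (Fin N) (Fin m) F) (C : Matrix (Fin l) (Fin N) F)
  (D : Matrix (Fin l) (Fin m) F) (x0 : Fin N → F)

theorem stateSeq_pilot_one : stateSeq A B x0 (pilot F N m) 1 = A *ᵥ x0 := by
  simp [stateSeq, pilot_zero]

theorem stateSeq_pilot_add_of_le (p : ℕ) {i : ℕ} (hi : i ≤ 2 * N) :
    stateSeq A B x0 (pilot F N m) ((2 * N + 1) * p + 1 + i) =
      A ^ i *ᵥ stateSeq A B x0 (pilot F N m) ((2 * N + 1) * p + 1) :=
  stateSeq_add_of_forall_lt A B x0 _ fun _ _ => pilot_eq_zero_of_lt_of_le p (by omega) (by omega)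

theorem stateSeq_pilot_mul_succ_add_one (p : ℕ) :
    stateSeq A B x0 (pilot F N m) ((2 * N + 1) * (p + 1) + 1) =
      A ^ (2 * N + 1) *ᵥ stateSeq A B x0 (pilot F N m) ((2 * N + 1) * p + 1) +
        B *ᵥ pilot F N m ((2 * N + 1) * (p + 1) : ℕ) := by
  rw [stateSeq, show (2 * N + 1) * (p + 1) = (2 * N + 1) * p + 1 + 2 * N by ring,
    stateSeq_pilot_add_of_le A B x0 p le_rfl, mulVec_mulVec, ← pow_succ']

theorem sum_smul_outSeq_pilot (α : ℕ → F) (p : ℕ) {i : ℕ} (hi : i < N) :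
    ∑ j ∈ range (N + 1),
        α j • outSeq A B C D x0 (pilot F N m) ((2 * N + 1) * p + (i + 1) + j : ℕ) =
      (C * (∑ k ∈ range (N + 1), α k • A ^ k) * A ^ i) *ᵥ
        stateSeq A B x0 (pilot F N m) ((2 * N + 1) * p + 1) := by
  rw [sum_smul_outSeq_of_forall_le A B C D x0 _ α fun j hj =>
      pilot_eq_zero_of_lt_of_le p (by omega) (by omega),
    show (2 * N + 1) * p + (i + 1) = (2 * N + 1) * p + 1 + i by ring,
    stateSeq_pilot_add_of_le A B x0 p (by omega), mulVec_mulVec]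

theorem forall_sum_smul_outSeq_pilot_eq_zero_iff (α : ℕ → F) (p : ℕ) :
    (∀ τ' : ℕ, 1 ≤ τ' → τ' ≤ N →
        ∑ j ∈ range (N + 1),
          α j • outSeq A B C D x0 (pilot F N m) (((2 * N + 1) * p + τ' + j : ℕ)) = 0) ↔
      ∀ i < N, (C * (∑ k ∈ range (N + 1), α k • A ^ k) * A ^ i) *ᵥ
        stateSeq A B x0 (pilot F N m) ((2 * N + 1) * p + 1) = 0 := by
  refine ⟨fun h i hi => ?_, fun h τ' h₁ h₂ => ?_⟩
  · rw [← sum_smul_outSeq_pilot A B C D x0 α p hi]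
    exact h (i + 1) (by omega) hi
  · obtain ⟨i, rfl⟩ := Nat.exists_eq_add_of_le' h₁
    rw [sum_smul_outSeq_pilot A B C D x0 α p (by omega)]
    exact h i (by omega)

end PilotResponse

/-- with arbitrary initial state and the pilot input, the scalars
`α_0, …, α_N` satisfy `Σ_{j=0}^{N} α_j·y[j+τ] = 0` for all
`τ = (2N+1)p + τ̃`, `0 ≤ p ≤ m`, `1 ≤ τ̃ ≤ N`, iff the polynomial
`P(t) = Σ_k α_k t^k` satisfies `C·P(A)·A^τ·B = 0` and `C·P(A)·A^{τ+1}·x0 = 0`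
for all natural `τ`. -/
theorem stmt12 {F : Type*} [Field F] {N m l : ℕ} (A : Matrix (Fin N) (Fin N) F)
    (B : Matrix (Fin N) (Fin m) F) (C : Matrix (Fin l) (Fin N) F)
    (D : Matrix (Fin l) (Fin m) F) (x0 : Fin N → F) (α : ℕ → F) :
    (∀ p ≤ m, ∀ τ' : ℕ, 1 ≤ τ' → τ' ≤ N →
        ∑ j ∈ Finset.range (N + 1),
          α j • outSeq A B C D x0 (pilot F N m) (((2 * N + 1) * p + τ' + j : ℕ)) = 0) ↔
      ((∀ τ : ℕ, C * (∑ k ∈ Finset.range (N + 1), α k • A ^ k) * A ^ τ * B = 0) ∧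
       (∀ τ : ℕ,
        (C * (∑ k ∈ Finset.range (N + 1), α k • A ^ k) * A ^ (τ + 1)).mulVec x0 = 0)) := by
  rw [forall₂_congr fun p _ => forall_sum_smul_outSeq_pilot_eq_zero_iff A B C D x0 α p]
  set Q := C * ∑ k ∈ range (N + 1), α k • A ^ k
  set z : ℕ → Fin N → F := fun p => stateSeq A B x0 (pilot F N m) ((2 * N + 1) * p + 1)
  have hCH := forall_mul_pow_mulVec_eq_zero_iff_forall_lt_card Q A
  simp only [Fintype.card_fin] at hCH
  simp_rw [← hCH]
  rw [forall_mul_pow_mulVec_eq_zero_iff_of_recurrence Q A (2 * N + 1) m z _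
    fun p _ => stateSeq_pilot_mul_succ_add_one A B x0 p, and_comm]
  refine and_congr ⟨fun h τ => ?_, fun h p _ τ => ?_⟩ (forall_congr' fun τ => ?_)
  · refine ext_of_mulVec_single fun k => ?_
    rw [zero_mulVec, ← mulVec_mulVec, ← pilot_mul_succ k]
    exact h k k.isLt τ
  · rw [mulVec_mulVec, h τ, zero_mulVec]
  · rw [show z 0 = A *ᵥ x0 from stateSeq_pilot_one A B x0, mulVec_mulVec, Matrix.mul_assoc,
      ← pow_succ]
end

section
/- Consider the discrete-time linear system with arbitrary initial state x0 ∈ F^N and pilot input sequence u₀[n] = Σ_{k=1}^{m} e_k·1{n = (2N+1)k}, with corresponding output sequence y₀. Let P(t) = Σ_{k=0}^{N} α_k t^k satisfy C·P(A)·A^τ·B = 0 for all τ ≥ 0 and C·P(A)·A^{τ+1}·x0 = 0 for all τ ≥ 0, and define the polynomial matrix G(z) = [g_1(z), ..., g_m(z)] with columns g_i(z) = Σ_{k=1}^{N+1} Σ_{j=0}^{N} α_j · y₀[j + (2N+1)i − k + 1] · z^{k−1}. Then for every causal input sequence u : ℤ → F^m and corresponding output y of the system (with the same initial state x0), the difference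 equation (P(z)y)[n] = (G(z)u)[n] holds for all n ≥ 1. -/
open Matrix Finset

section Aux

variable {F : Type*} [Field F] {N m l : ℕ} (A : Matrix (Fin N) (Fin N) F)
    (B : Matrix (Fin N) (Fin m) F) (C : Matrix (Fin l) (Fin N) F)
    (D : Matrix (Fin l) (Fin m) F) (x0 : Fin N → F) (α : ℕ → F)

/-- Markov parameter. -/
def Mk (s : ℤ) : Matrix (Fin l) (Fin m) F :=
  if s < 0 then 0 else if s = 0 then D else C * A ^ (s - 1).toNat * B

lemma sum_mulVec' {ι : Type*} (s : Finset ι) (f : ι → Matrix (Fin l) (Fin m) F)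
    (v : Fin m → F) : (∑ i ∈ s, f i).mulVec v = ∑ i ∈ s, (f i).mulVec v := by
  ext j
  simp only [Matrix.mulVec, dotProduct, Matrix.sum_apply, Finset.sum_apply, Finset.sum_mul]
  rw [Finset.sum_comm]

lemma mulVec_sumVec {ι : Type*} {n p : ℕ} (M : Matrix (Fin n) (Fin p) F)
    (s : Finset ι) (v : ι → Fin p → F) :
    M.mulVec (∑ i ∈ s, v i) = ∑ i ∈ s, M.mulVec (v i) := by
  ext j
  simp only [Matrix.mulVec, dotProduct, Finset.sum_apply, Finset.mul_sum]
  rw [Finset.sum_comm]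

lemma stateSeq_eq (u : ℤ → Fin m → F) (n : ℕ) :
    stateSeq A B x0 u n =
      (A ^ n).mulVec x0 + ∑ t ∈ range n, (A ^ (n - 1 - t) * B).mulVec (u t) := by
  induction n with
  | zero => simp [stateSeq]
  | succ n ih =>
      rw [stateSeq, ih, Matrix.mulVec_add, mulVec_sumVec, Finset.sum_range_succ]
      have h1 : A *ᵥ A ^ n *ᵥ x0 = A ^ (n + 1) *ᵥ x0 := by
        rw [Matrix.mulVec_mulVec, ← pow_succ']
      have h2 : ∀ t ∈ range n,
          A *ᵥ (A ^ (n - 1 - t) * B) *ᵥ u t = (A ^ (n + 1 - 1 - t) * B) *ᵥ u t := by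
        intro t ht
        rw [Matrix.mulVec_mulVec, ← Matrix.mul_assoc, ← pow_succ']
        have h : n - 1 - t + 1 = n + 1 - 1 - t := by
          simp only [Finset.mem_range] at ht; omega
        rw [h]
      rw [Finset.sum_congr rfl h2] at *
      rw [h1]
      have h3 : (A ^ (n + 1 - 1 - n) * B) *ᵥ u n = B *ᵥ u n := by
        simp
      rw [h3]
      abel

end Aux

section Aux2

variable {F : Type*} [Field F] {N m l : ℕ} (A : Matrix (Fin N) (Fin N) F)
    (B : Matrix (Fin N) (Fin m) F) (C : Matrix (Fin l) (Fin N) F)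
    (D : Matrix (Fin l) (Fin m) F) (x0 : Fin N → F) (α : ℕ → F)

lemma out_eq (u : ℤ → Fin m → F) (s : ℕ) :
    outSeq A B C D x0 u (s : ℤ) =
      (C * A ^ s).mulVec x0 +
        ∑ t ∈ range (s + 1), (Mk A B C D ((s : ℤ) - (t : ℕ))).mulVec (u t) := by
  rw [outSeq, if_neg (by omega : ¬ (s : ℤ) < 0)]
  have hts : ((s : ℤ)).toNat = s := by omega
  rw [hts, stateSeq_eq, Matrix.mulVec_add, mulVec_sumVec, Finset.sum_range_succ]
  have hMk0 : Mk A B C D ((s : ℤ) - (s : ℕ)) = D := by simp [Mk]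
  rw [hMk0]
  have h2 : ∀ t ∈ range s,
      C *ᵥ (A ^ (s - 1 - t) * B) *ᵥ u t = (Mk A B C D ((s : ℤ) - (t : ℕ))).mulVec (u t) := by
    intro t ht
    simp only [mem_range] at ht
    rw [Matrix.mulVec_mulVec, ← Matrix.mul_assoc]
    rw [Mk, if_neg (by omega), if_neg (by omega)]
    have : ((s : ℤ) - (t : ℕ) - 1).toNat = s - 1 - t := by omega
    rw [this]
  rw [Finset.sum_congr rfl h2, Matrix.mulVec_mulVec]
  abel

lemma out_eq' (u : ℤ → Fin m → F) (s T : ℕ) (hT : s < T) :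
    outSeq A B C D x0 u (s : ℤ) =
      (C * A ^ s).mulVec x0 +
        ∑ t ∈ range T, (Mk A B C D ((s : ℤ) - (t : ℕ))).mulVec (u t) := by
  rw [out_eq]
  congr 1
  apply Finset.sum_subset
  · intro x hx
    simp only [mem_range] at *
    omega
  · intro t ht hts
    simp only [mem_range] at ht hts
    rw [Mk, if_pos (by omega), Matrix.zero_mulVec]

/-- `H[s] = Σ_j α_j M[s+j]`. -/
def Hk (s : ℤ) : Matrix (Fin l) (Fin m) F :=
  ∑ j ∈ range (N + 1), α j • Mk A B C D (s + j)

lemma Hk_pos (hB : ∀ τ : ℕ,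
      C * (∑ k ∈ Finset.range (N + 1), α k • A ^ k) * A ^ τ * B = 0)
    (s : ℤ) (hs : 1 ≤ s) : Hk A B C D α s = 0 := by
  have h1 : ∀ j ∈ range (N + 1),
      α j • Mk A B C D (s + j) = α j • (C * A ^ j * A ^ (s - 1).toNat * B) := by
    intro j _
    congr 1
    rw [Mk, if_neg (by omega), if_neg (by omega)]
    have h : (s + j - 1).toNat = j + (s - 1).toNat := by omega
    rw [h, pow_add, ← Matrix.mul_assoc]
  rw [Hk, Finset.sum_congr rfl h1]
  calc ∑ j ∈ range (N + 1), α j • (C * A ^ j * A ^ (s - 1).toNat * B)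
      = C * (∑ k ∈ range (N + 1), α k • A ^ k) * A ^ (s - 1).toNat * B := by
        simp only [Matrix.mul_sum, Matrix.sum_mul, Matrix.mul_smul, Matrix.smul_mul]
    _ = 0 := hB _

lemma Hk_neg (s : ℤ) (hs : s + N < 0) : Hk A B C D α s = 0 := by
  apply Finset.sum_eq_zero
  intro j hj
  simp only [mem_range] at hj
  rw [Mk, if_pos (by omega), smul_zero]

end Aux2

section Aux3

variable {F : Type*} [Field F] {N m l : ℕ} (A : Matrix (Fin N) (Fin N) F)
    (B : Matrix (Fin N) (Fin m) F) (C : Matrix (Fin l) (Fin N) F)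
    (D : Matrix (Fin l) (Fin m) F) (x0 : Fin N → F) (α : ℕ → F)

lemma range_split {M : Type*} [AddCommMonoid M] (a b : ℕ) (f : ℕ → M) :
    ∑ t ∈ range (a + b), f t = (∑ t ∈ range a, f t) + ∑ d ∈ range b, f (a + d) := by
  induction b with
  | zero => simp
  | succ b ih => rw [Nat.add_succ, sum_range_succ, ih, sum_range_succ, add_assoc]

lemma mulVec_decomp (M : Matrix (Fin l) (Fin m) F) (v : Fin m → F) :
    M.mulVec v = ∑ i : Fin m, v i • M.mulVec (Pi.single i 1) := by
  ext j
  simp [Matrix.mulVec, dotProduct, Finset.sum_apply, mul_comm]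

lemma key (hx : ∀ τ : ℕ,
      (C * (∑ k ∈ Finset.range (N + 1), α k • A ^ k) * A ^ (τ + 1)).mulVec x0 = 0)
    (u : ℤ → Fin m → F) (a : ℕ) (ha : 1 ≤ a) (T : ℕ) (hT : a + N < T) :
    ∑ j ∈ range (N + 1), α j • outSeq A B C D x0 u ((a + j : ℕ) : ℤ) =
      ∑ t ∈ range T, (Hk A B C D α ((a : ℤ) - t)).mulVec (u t) := by
  have h1 : ∀ j ∈ range (N + 1),
      α j • outSeq A B C D x0 u ((a + j : ℕ) : ℤ) =
        α j • ((C * A ^ (a + j)).mulVec x0) +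
          ∑ t ∈ range T, (α j • Mk A B C D ((a : ℤ) - t + j)).mulVec (u t) := by
    intro j hj
    simp only [mem_range] at hj
    rw [out_eq' A B C D x0 u (a + j) T (by omega), smul_add, Finset.smul_sum]
    congr 1
    apply Finset.sum_congr rfl
    intro t _
    rw [Matrix.smul_mulVec]
    have harg : ((a + j : ℕ) : ℤ) - (t : ℕ) = (a : ℤ) - t + j := by push_cast; omega
    rw [harg]
  rw [Finset.sum_congr rfl h1, Finset.sum_add_distrib]
  have hz : ∑ j ∈ range (N + 1), α j • ((C * A ^ (a + j)).mulVec x0) = 0 := by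
    have he : ∑ j ∈ range (N + 1), α j • ((C * A ^ (a + j)).mulVec x0)
        = (C * (∑ k ∈ range (N + 1), α k • A ^ k) * A ^ a).mulVec x0 := by
      rw [Matrix.mul_sum, Matrix.sum_mul, sum_mulVec']
      apply Finset.sum_congr rfl
      intro j _
      rw [Matrix.mul_smul, Matrix.smul_mul, Matrix.smul_mulVec]
      congr 2
      rw [Matrix.mul_assoc, ← pow_add, Nat.add_comm]
    rw [he]
    have h := hx (a - 1)
    rwa [Nat.sub_add_cancel ha] at h
  rw [hz, zero_add, Finset.sum_comm]
  apply Finset.sum_congr rfl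
  intro t _
  rw [Hk, ← sum_mulVec']

end Aux3

section Aux4

variable {F : Type*} [Field F] {N m l : ℕ} (A : Matrix (Fin N) (Fin N) F)
    (B : Matrix (Fin N) (Fin m) F) (C : Matrix (Fin l) (Fin N) F)
    (D : Matrix (Fin l) (Fin m) F) (α : ℕ → F)

lemma pilot_sum (a T : ℕ) :
    ∑ t ∈ range T, (Hk A B C D α ((a : ℤ) - t)).mulVec (pilot F N m t) =
      ∑ i : Fin m, if (2 * N + 1) * ((i : ℕ) + 1) < T then
        (Hk A B C D α ((a : ℤ) - ((2 * N + 1) * ((i : ℕ) + 1) : ℕ))).mulVec (Pi.single i 1)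
      else 0 := by
  have h1 : ∀ t ∈ range T, (Hk A B C D α ((a : ℤ) - t)).mulVec (pilot F N m t) =
      ∑ i : Fin m, if t = (2 * N + 1) * ((i : ℕ) + 1) then
        (Hk A B C D α ((a : ℤ) - t)).mulVec (Pi.single i 1) else 0 := by
    intro t _
    simp only [pilot]
    rw [mulVec_sumVec]
    apply Finset.sum_congr rfl
    intro i _
    rw [apply_ite (Hk A B C D α ((a : ℤ) - t)).mulVec, Matrix.mulVec_zero]
    congr 1
    norm_cast
  rw [Finset.sum_congr rfl h1, Finset.sum_comm]
  apply Finset.sum_congr rfl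
  intro i _
  rw [Finset.sum_ite_eq' (range T) ((2 * N + 1) * ((i : ℕ) + 1))
    (fun t => (Hk A B C D α ((a : ℤ) - t)).mulVec (Pi.single i 1))]
  simp only [Finset.mem_range]

end Aux4

lemma sum_Icc_one {M : Type*} [AddCommMonoid M] (n : ℕ) (f : ℕ → M) :
    ∑ k ∈ Finset.Icc 1 n, f k = ∑ d ∈ range n, f (d + 1) := by
  induction n with
  | zero => simp
  | succ n ih => rw [Finset.sum_Icc_succ_top (by omega), ih, sum_range_succ]

/-- let `y₀` be the output of the system (initial state `x0`)
under the pilot input, let `P(t) = Σ_{k=0}^{N} α_k t^k` satisfy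
`C·P(A)·A^τ·B = 0` and `C·P(A)·A^{τ+1}·x0 = 0` for all `τ ≥ 0`, and let
`G(z) = [g_1(z), …, g_m(z)]` with
`g_i(z) = Σ_{k=1}^{N+1} Σ_{j=0}^{N} α_j·y₀[j+(2N+1)i−k+1]·z^{k−1}`.
Then for every causal input `u` with output `y` (same initial state `x0`),
`(P(z)y)[n] = (G(z)u)[n]` for all `n ≥ 1`. -/
theorem stmt15 {F : Type*} [Field F] {N m l : ℕ} (A : Matrix (Fin N) (Fin N) F)
    (B : Matrix (Fin N) (Fin m) F) (C : Matrix (Fin l) (Fin N) F)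
    (D : Matrix (Fin l) (Fin m) F) (x0 : Fin N → F) (α : ℕ → F)
    (hB : ∀ τ : ℕ,
      C * (∑ k ∈ Finset.range (N + 1), α k • A ^ k) * A ^ τ * B = 0)
    (hx : ∀ τ : ℕ,
      (C * (∑ k ∈ Finset.range (N + 1), α k • A ^ k) * A ^ (τ + 1)).mulVec x0 = 0)
    (u : ℤ → Fin m → F) (hu : ∀ n : ℤ, n < 0 → u n = 0) :
    ∀ n : ℤ, 1 ≤ n →
      ∑ k ∈ Finset.range (N + 1), α k • outSeq A B C D x0 u (n + k) =
        ∑ i : Fin m, ∑ k ∈ Finset.Icc 1 (N + 1),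
          u (n + (k : ℤ) - 1) i •
            ∑ j ∈ Finset.range (N + 1),
              α j • outSeq A B C D x0 (pilot F N m)
                ((j : ℤ) + (2 * N + 1) * ((i : ℕ) + 1) - (k : ℤ) + 1) := by
  intro n hn
  -- LHS
  have hL : ∑ k ∈ Finset.range (N + 1), α k • outSeq A B C D x0 u (n + k)
      = ∑ d ∈ range (N + 1), (Hk A B C D α (-(d : ℤ))).mulVec (u (n + d)) := by
    have e1 : ∀ k ∈ range (N + 1),
        α k • outSeq A B C D x0 u (n + k)
          = α k • outSeq A B C D x0 u ((n.toNat + k : ℕ) : ℤ) := by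
      intro k _
      have h : n + (k : ℤ) = ((n.toNat + k : ℕ) : ℤ) := by push_cast; omega
      rw [h]
    rw [Finset.sum_congr rfl e1,
      key A B C D x0 α hx u n.toNat (by omega) (n.toNat + (N + 1)) (by omega),
      range_split]
    have z1 : ∑ t ∈ range n.toNat,
        (Hk A B C D α ((n.toNat : ℤ) - t)).mulVec (u t) = 0 := by
      apply Finset.sum_eq_zero
      intro t ht
      simp only [mem_range] at ht
      rw [Hk_pos A B C D α hB _ (by omega), Matrix.zero_mulVec]
    rw [z1, zero_add]
    apply Finset.sum_congr rfl
    intro d hd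
    have ea : ((n.toNat : ℤ)) - ((n.toNat + d : ℕ) : ℤ) = -(d : ℤ) := by push_cast; omega
    have eb : ((n.toNat + d : ℕ) : ℤ) = n + d := by push_cast; omega
    rw [ea, eb]
  rw [hL]
  -- RHS inner sums
  have hR : ∀ (i : Fin m), ∀ k ∈ Finset.Icc 1 (N + 1),
      (∑ j ∈ Finset.range (N + 1),
        α j • outSeq A B C D x0 (pilot F N m)
          ((j : ℤ) + (2 * N + 1) * ((i : ℕ) + 1) - (k : ℤ) + 1))
      = (Hk A B C D α (1 - (k : ℤ))).mulVec (Pi.single i 1) := by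
    intro i k hk
    simp only [Finset.mem_Icc] at hk
    have hc : 2 * N + 1 ≤ (2 * N + 1) * ((i : ℕ) + 1) :=
      Nat.le_mul_of_pos_right _ (by omega)
    set c := (2 * N + 1) * ((i : ℕ) + 1) with hcdef
    set a := c + 1 - k with hadef
    have e1 : ∀ j ∈ range (N + 1),
        α j • outSeq A B C D x0 (pilot F N m) ((j : ℤ) + (c : ℕ) - (k : ℤ) + 1)
          = α j • outSeq A B C D x0 (pilot F N m) ((a + j : ℕ) : ℤ) := by
      intro j _
      have h : (j : ℤ) + (c : ℕ) - (k : ℤ) + 1 = ((a + j : ℕ) : ℤ) := by push_cast; omega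
      rw [h]
    have ecast : ∀ j : ℕ, ((j : ℤ) + (2 * N + 1) * ((i : ℕ) + 1) - (k : ℤ) + 1)
        = ((j : ℤ) + (c : ℕ) - (k : ℤ) + 1) := by
      intro j
      rw [hcdef]
      push_cast
      ring
    calc ∑ j ∈ Finset.range (N + 1),
          α j • outSeq A B C D x0 (pilot F N m)
            ((j : ℤ) + (2 * N + 1) * ((i : ℕ) + 1) - (k : ℤ) + 1)
        = ∑ j ∈ Finset.range (N + 1),
            α j • outSeq A B C D x0 (pilot F N m) ((a + j : ℕ) : ℤ) := by
          apply Finset.sum_congr rfl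
          intro j hj
          rw [ecast j]
          exact e1 j hj
      _ = ∑ t ∈ range (a + (N + 1)),
            (Hk A B C D α ((a : ℤ) - t)).mulVec (pilot F N m t) := by
          exact key A B C D x0 α hx (pilot F N m) a (by omega) (a + (N + 1)) (by omega)
      _ = ∑ i' : Fin m, if (2 * N + 1) * ((i' : ℕ) + 1) < a + (N + 1) then
            (Hk A B C D α ((a : ℤ) - ((2 * N + 1) * ((i' : ℕ) + 1) : ℕ))).mulVec
              (Pi.single i' 1)
          else 0 := pilot_sum A B C D α a (a + (N + 1))
      _ = (Hk A B C D α (1 - (k : ℤ))).mulVec (Pi.single i 1) := by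
          rw [Finset.sum_eq_single i]
          · have hlt : c < a + (N + 1) := by omega
            rw [if_pos (hcdef ▸ hlt)]
            have harg : (a : ℤ) - ((2 * N + 1) * ((i : ℕ) + 1) : ℕ) = 1 - (k : ℤ) := by
              rw [← hcdef]; omega
            rw [harg]
          · intro b _ hbi
            have hb2 : (b : ℕ) + 1 ≤ (i : ℕ) ∨ (i : ℕ) + 1 ≤ (b : ℕ) := by
              rcases Nat.lt_or_ge (b : ℕ) (i : ℕ) with h | h
              · left; omega
              · right
                have : (b : ℕ) ≠ (i : ℕ) := fun h' => hbi (Fin.ext h')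
                omega
            have hcb : 2 * N + 1 ≤ (2 * N + 1) * ((b : ℕ) + 1) :=
              Nat.le_mul_of_pos_right _ (by omega)
            set cb := (2 * N + 1) * ((b : ℕ) + 1) with hcbdef
            rcases hb2 with h | h
            · -- b < i : cb + (2N+1) ≤ c, so a - cb ≥ 1
              have hmul : cb + (2 * N + 1) ≤ c := by
                have h1 : (2 * N + 1) * ((b : ℕ) + 2) ≤ (2 * N + 1) * ((i : ℕ) + 1) :=
                  Nat.mul_le_mul_left _ (by omega)
                rw [hcbdef, hcdef]
                nlinarith
              by_cases hbT : cb < a + (N + 1)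
              · rw [if_pos hbT, Hk_pos A B C D α hB _ (by omega), Matrix.zero_mulVec]
              · rw [if_neg hbT]
            · -- i < b : c + (2N+1) ≤ cb, so a - cb + N < 0
              have hmul : c + (2 * N + 1) ≤ cb := by
                have h1 : (2 * N + 1) * ((i : ℕ) + 2) ≤ (2 * N + 1) * ((b : ℕ) + 1) :=
                  Nat.mul_le_mul_left _ (by omega)
                rw [hcbdef, hcdef]
                nlinarith
              by_cases hbT : cb < a + (N + 1)
              · rw [if_pos hbT, Hk_neg A B C D α _ (by omega), Matrix.zero_mulVec]
              · rw [if_neg hbT]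
          · intro hni
            exact absurd (Finset.mem_univ i) hni
  -- put RHS together
  have hR2 : ∑ i : Fin m, ∑ k ∈ Finset.Icc 1 (N + 1),
      u (n + (k : ℤ) - 1) i •
        ∑ j ∈ Finset.range (N + 1),
          α j • outSeq A B C D x0 (pilot F N m)
            ((j : ℤ) + (2 * N + 1) * ((i : ℕ) + 1) - (k : ℤ) + 1)
      = ∑ k ∈ Finset.Icc 1 (N + 1),
          (Hk A B C D α (1 - (k : ℤ))).mulVec (u (n + (k : ℤ) - 1)) := by
    rw [Finset.sum_comm]
    apply Finset.sum_congr rfl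
    intro k hk
    rw [mulVec_decomp]
    apply Finset.sum_congr rfl
    intro i _
    rw [hR i k hk]
  rw [hR2, sum_Icc_one]
  apply Finset.sum_congr rfl
  intro d hd
  have e1 : (1 : ℤ) - ((d + 1 : ℕ) : ℤ) = -(d : ℤ) := by push_cast; ring
  have e2 : n + ((d + 1 : ℕ) : ℤ) - 1 = n + d := by push_cast; ring
  rw [e1, e2]
end

section
/- Let G be an l×m matrix with entries in the polynomial ring F[z] over a field F, and let S ⊆ {1, ..., m} be a set of column indices. Then the map sending a causal sequence u : ℤ → F^m that is supported on S (i.e., u_i[n] = 0 for all n whenever i ∉ S) to the sequence G(z)u is injective if and only if the columns of G indexed by S are linearly independent over F[z]. Consequently, for a partition of the columns of G into groups G_{s_1}, ..., G_{s_r} (one group of R_s columns per source s) and a tuple of integers (R'_s) with R'_s ≤ R_s, there exists for each s a set S_s of R'_s column indices within group s such that the map on causal inputs supported on ∪_s S_s is injective, if and only if for each s there exist R'_s columns of G_s whose union over all s is a linearly independent set over F[z]. -/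
/-!
Sequences `ℤ → F` form an `F[z]`-module in which `z` acts as the forward shift, and `G(z)u = 0`
is the linear relation `∑ⱼ G i j • uⱼ = 0` over `F[z]`. If the columns in `S` are independent,
clearing denominators in a left inverse over the fraction field gives `B` with `B G_S = d • 1`,
`d ≠ 0`, hence `d(z) uⱼ = 0`; and a nonzero polynomial kills no nonzero causal sequence, because
its leading coefficient determines `u[n]` from `u[n - 1], …, u[n - deg d]`. Conversely a relation
`∑ⱼ cⱼ Gⱼ = 0` gives the kernel element `uⱼ = cⱼ(z) δ_N`, whose entries are the coefficients of
`cⱼ` read backwards from time `N`: causal once `N ≥ deg cⱼ`, and nonzero.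
-/

open Polynomial Finset Matrix

section ForwardShift

variable {R : Type*} [CommRing R]

variable (R) in
def forwardShift : Module.End R (ℤ → R) := LinearMap.funLeft R R (· + 1)

theorem forwardShift_pow_apply (k : ℕ) (x : ℤ → R) (n : ℤ) :
    (forwardShift R ^ k) x n = x (n + k) := by
  induction k generalizing x with
  | zero => simp
  | succ k ih =>
    rw [pow_succ, Module.End.mul_apply, ih, Nat.cast_succ, ← add_assoc]
    rfl

theorem aeval_forwardShift_apply (p : R[X]) (x : ℤ → R) (n : ℤ) :
    aeval (forwardShift R) p x n = p.sum fun k a => a * x (n + k) := by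
  simp [aeval_eq_sum_range, Polynomial.sum_over_range, forwardShift_pow_apply]

theorem aeval_forwardShift_single_apply (p : R[X]) {N n : ℤ} {k : ℕ} (h : n + k = N) :
    aeval (forwardShift R) p (Pi.single N 1) n = p.coeff k := by
  simp only [aeval_forwardShift_apply, Polynomial.sum_def, Pi.single_apply, ← h, add_right_inj,
    Nat.cast_inj, mul_ite, mul_one, mul_zero, Finset.sum_ite_eq', mem_support_iff]
  split_ifs with hk <;> simp_all

theorem eq_zero_of_aeval_forwardShift_eq_zero [NoZeroDivisors R] {p : R[X]} (hp : p ≠ 0)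
    {x : ℤ → R} (hx : ∀ n < 0, x n = 0) (h : aeval (forwardShift R) p x = 0) : x = 0 := by
  suffices ∀ N : ℕ, ∀ n : ℤ, n < N → x n = 0 from funext fun n => this (n.toNat + 1) n (by omega)
  intro N
  induction N with
  | zero => exact_mod_cast hx
  | succ N ih =>
    intro n hn
    obtain hn | rfl : n < N ∨ n = N := by omega
    · exact ih n hn
    have hrec := congrFun h (N - p.natDegree)
    rw [aeval_forwardShift_apply, Polynomial.sum_over_range _ (fun _ => zero_mul _),
      Finset.sum_range_succ, Finset.sum_eq_zero fun k hk => ?_, zero_add,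
      sub_add_cancel] at hrec
    · exact (mul_eq_zero.mp hrec).resolve_left (leadingCoeff_ne_zero.mpr hp)
    · rw [ih _ (by simp at hk; omega), mul_zero]

end ForwardShift

theorem LinearIndependent.exists_dotProduct_eq_ite {R ι κ : Type*} [CommRing R] [IsDomain R]
    [Fintype ι] [DecidableEq ι] [Fintype κ] {v : ι → κ → R} (hv : LinearIndependent R v) :
    ∃ d ≠ (0 : R), ∃ B : ι → κ → R, ∀ i j, B i ⬝ᵥ v j = if i = j then d else 0 := by
  classical
  let K := FractionRing R
  let vK : ι → κ → K := fun i => algebraMap R K ∘ v i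
  obtain ⟨g, hg⟩ := LinearMap.exists_leftInverse_of_injective (Fintype.linearCombination K vK) <|
    LinearMap.ker_eq_bot.mpr <| linearIndependent_iff_injective_fintypeLinearCombination.mp <|
      linearIndependent_algebraMap_comp_iff.mpr hv
  have hgv (j : ι) : g (vK j) = Pi.single j 1 := by
    simpa [Fintype.linearCombination_apply, Pi.single_apply] using
      LinearMap.congr_fun hg (Pi.single j 1)
  obtain ⟨b, hb⟩ := IsLocalization.exist_integer_multiples_of_finite (nonZeroDivisors R)
    fun ik : ι × κ => g (Pi.single ik.2 1) ik.1
  choose B hB using hb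
  refine ⟨b, nonZeroDivisors.ne_zero b.2, fun i k => B (i, k), fun i j => ?_⟩
  apply IsFractionRing.injective R K
  calc algebraMap R K (∑ k, B (i, k) * v j k)
      = (b : R) • ∑ k, vK j k • g (Pi.single k 1) i := by
        simp [map_sum, hB, Finset.smul_sum, vK, mul_comm]
    _ = (b : R) • g (vK j) i := by
        simp only [LinearMap.pi_apply_eq_sum_univ g (vK j), ← Pi.single_apply, Pi.single_comm,
          Finset.sum_apply, Pi.smul_apply]
    _ = algebraMap R K (if i = j then b else 0) := by
        rw [hgv, Pi.single_apply]
        split_ifs <;> simp [Algebra.smul_def]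

theorem LinearIndependent.exists_smul_eq_zero {R M ι κ : Type*} [CommRing R] [IsDomain R]
    [AddCommGroup M] [Module R M] [Fintype ι] [Fintype κ] {v : ι → κ → R}
    (hv : LinearIndependent R v) {w : ι → M} (hw : ∀ k, ∑ i, v i k • w i = 0) :
    ∃ d ≠ (0 : R), ∀ i, d • w i = 0 := by
  classical
  obtain ⟨d, hd, B, hB⟩ := hv.exists_dotProduct_eq_ite
  refine ⟨d, hd, fun i => ?_⟩
  calc d • w i = ∑ j, (B i ⬝ᵥ v j) • w j := by simp [hB]
    _ = ∑ k, B i k • ∑ j, v j k • w j := by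
        simp only [dotProduct, Finset.sum_smul, Finset.smul_sum, smul_smul]
        exact Finset.sum_comm
    _ = 0 := by simp [hw]

section Causal

variable {R ι κ : Type*} [CommRing R] [Fintype ι]

theorem eq_zero_of_linearIndependent_of_causal [IsDomain R] [Fintype κ] {g : ι → κ → R[X]}
    {S : Finset ι} (hg : LinearIndependent R[X] fun j : S => g j) {w : ι → ℤ → R}
    (hcausal : ∀ j, ∀ n < 0, w j n = 0) (hsupp : ∀ j ∉ S, w j = 0)
    (hker : ∀ k, ∑ j, aeval (forwardShift R) (g j k) (w j) = 0) : w = 0 := by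
  let of := Module.AEval'.of (forwardShift R)
  obtain ⟨d, hd, hdw⟩ := hg.exists_smul_eq_zero (w := fun j : S => of (w j)) fun k => by
    apply of.symm.injective
    rw [map_sum, map_zero, ← hker k]
    change ∑ j : S, aeval (forwardShift R) (g j k) (w j) = _
    rw [Finset.sum_coe_sort S fun j => aeval (forwardShift R) (g j k) (w j)]
    refine Finset.sum_subset (Finset.subset_univ S) fun j _ hj => ?_
    simp [hsupp j hj]
  funext j
  by_cases hj : j ∈ S
  · exact eq_zero_of_aeval_forwardShift_eq_zero hd (hcausal j) <|
      of.injective ((Module.AEval.of_aeval_smul _ _ _).trans (hdw ⟨j, hj⟩))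
  · exact hsupp j hj

theorem exists_causal_ne_zero_of_not_linearIndependent {g : ι → κ → R[X]} {S : Finset ι}
    (hg : ¬LinearIndependent R[X] fun j : S => g j) :
    ∃ w : ι → ℤ → R, (∀ j, ∀ n < 0, w j n = 0) ∧ (∀ j ∉ S, w j = 0) ∧
      (∀ k, ∑ j, aeval (forwardShift R) (g j k) (w j) = 0) ∧ w ≠ 0 := by
  classical
  obtain ⟨c, hc, j₀, hj₀⟩ := Fintype.not_linearIndependent_iff.mp hg
  let c' : ι → R[X] := fun j => if h : j ∈ S then c ⟨j, h⟩ else 0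
  let N := Finset.univ.sup fun j => (c' j).natDegree
  have hN (j : ι) : (c' j).natDegree ≤ N :=
    Finset.le_sup (f := fun j => (c' j).natDegree) (mem_univ j)
  let w : ι → ℤ → R := fun j => aeval (forwardShift R) (c' j) (Pi.single (N : ℤ) 1)
  refine ⟨w, fun j n hn => ?_, fun j hj => ?_, fun k => ?_, fun hw => ?_⟩
  · dsimp only [w]
    rw [aeval_forwardShift_single_apply _ (k := (N - n).toNat) (by omega)]
    exact coeff_eq_zero_of_natDegree_lt (by have := hN j; omega)
  · simp [w, c', hj]
  · have hck : ∑ j, g j k * c' j = 0 := by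
      have := congrFun hc k
      simp only [Finset.sum_apply, Pi.smul_apply, smul_eq_mul, Pi.zero_apply] at this
      rw [← this, ← Finset.sum_subset (Finset.subset_univ S) fun j _ hj => by simp [c', hj],
        ← Finset.sum_coe_sort S]
      exact Finset.sum_congr rfl fun j _ => by simp [c', mul_comm]
    simp only [w, ← Module.End.mul_apply, ← map_mul, ← LinearMap.sum_apply, ← map_sum, hck,
      map_zero, LinearMap.zero_apply]
  · have := congrFun (congrFun hw j₀) (N - (c' j₀).natDegree)
    dsimp only [w] at this
    rw [aeval_forwardShift_single_apply _ (k := (c' j₀).natDegree) (by omega)] at this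
    simp [c', hj₀] at this

theorem linearIndependent_iff_forall_causal_eq_zero [IsDomain R] [Fintype κ] (g : ι → κ → R[X])
    (S : Finset ι) :
    LinearIndependent R[X] (fun j : S => g j) ↔
      ∀ w : ι → ℤ → R, (∀ j, ∀ n < 0, w j n = 0) → (∀ j ∉ S, w j = 0) →
        (∀ k, ∑ j, aeval (forwardShift R) (g j k) (w j) = 0) → w = 0 := by
  refine ⟨fun hg _ => eq_zero_of_linearIndependent_of_causal hg, fun h => by_contra fun hg => ?_⟩
  obtain ⟨w, hcausal, hsupp, hker, hw⟩ := exists_causal_ne_zero_of_not_linearIndependent hg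
  exact hw (h w hcausal hsupp hker)

end Causal

theorem matShift_apply {F : Type*} [Field F] {p q : ℕ} (G : Matrix (Fin p) (Fin q) F[X])
    (u : ℤ → Fin q → F) (n : ℤ) (i : Fin p) :
    matShift G u n i = ∑ j, aeval (forwardShift F) (G i j) (fun t => u t j) n := by
  simp [matShift, aeval_forwardShift_apply]

theorem matShift_injOn_causal_iff_linearIndependent {F : Type*} [Field F] {l m : ℕ}
    (G : Matrix (Fin l) (Fin m) F[X]) (S : Finset (Fin m)) :
    (∀ u v : ℤ → Fin m → F,
        (∀ n : ℤ, n < 0 → u n = 0) → (∀ n : ℤ, n < 0 → v n = 0) →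
        (∀ i ∉ S, ∀ n : ℤ, u n i = 0) → (∀ i ∉ S, ∀ n : ℤ, v n i = 0) →
        (∀ n : ℤ, matShift G u n = matShift G v n) → u = v) ↔
      LinearIndependent F[X] (fun j : S => Gᵀ j) := by
  refine Iff.trans ?_ (linearIndependent_iff_forall_causal_eq_zero (fun j i => G i j) S).symm
  constructor
  · intro hinj w hcausal hsupp hker
    have := hinj (fun n j => w j n) 0 (fun n hn => funext fun j => hcausal j n hn)
      (fun _ _ => rfl) (fun j hj n => congrFun (hsupp j hj) n) (fun _ _ _ => rfl)
      fun n => funext fun i => by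
        simpa [matShift_apply, ← Pi.zero_def] using congrFun (hker i) n
    funext j n
    exact congrFun (congrFun this n) j
  · intro hker u v hu hv hsu hsv huv
    have := hker (fun j => (fun n => u n j) - (fun n => v n j))
      (fun j n hn => by simp [hu n hn, hv n hn])
      (fun j hj => funext fun n => by simp [hsu j hj, hsv j hj])
      fun i => funext fun n => by
        simpa [matShift_apply, Finset.sum_sub_distrib, sub_eq_zero] using congrFun (huv n) i
    funext n j
    exact sub_eq_zero.mp (congrFun (congrFun this j) n)

/-- (a) for a set `S` of column indices, the map `u ↦ G(z)u` on
causal sequences supported on `S` is injective iff the columns of `G` indexed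
by `S` are linearly independent over `F[z]`; (b) consequently, for a partition
of the columns into groups (one group per source, given by `σ`) and a tuple
`(R'_s)` with `R'_s ≤ R_s`, there is for each `s` a set of `R'_s` column
indices within group `s` such that the map on causal inputs supported on their
union is injective, iff for each `s` there exist `R'_s` columns of the group
`G_s` whose union over all `s` is linearly independent over `F[z]`. -/
theorem stmt16 {F : Type*} [Field F] {l m : ℕ}
    (G : Matrix (Fin l) (Fin m) (Polynomial F)) :
    (∀ S : Finset (Fin m),
      ((∀ u v : ℤ → Fin m → F,
          (∀ n : ℤ, n < 0 → u n = 0) → (∀ n : ℤ, n < 0 → v n = 0) →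
          (∀ i ∉ S, ∀ n : ℤ, u n i = 0) → (∀ i ∉ S, ∀ n : ℤ, v n i = 0) →
          (∀ n : ℤ, matShift G u n = matShift G v n) → u = v) ↔
        LinearIndependent (Polynomial F) (fun j : {x // x ∈ S} => G.transpose j.val))) ∧
    (∀ r : ℕ, ∀ σ : Fin m → Fin r, ∀ R' : Fin r → ℕ,
      (∀ s : Fin r, R' s ≤ (Finset.univ.filter (fun j => σ j = s)).card) →
      ((∃ S : Finset (Fin m),
          (∀ s : Fin r, (S.filter (fun j => σ j = s)).card = R' s) ∧
          (∀ u v : ℤ → Fin m → F,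
            (∀ n : ℤ, n < 0 → u n = 0) → (∀ n : ℤ, n < 0 → v n = 0) →
            (∀ i ∉ S, ∀ n : ℤ, u n i = 0) → (∀ i ∉ S, ∀ n : ℤ, v n i = 0) →
            (∀ n : ℤ, matShift G u n = matShift G v n) → u = v)) ↔
        (∃ S : Finset (Fin m),
          (∀ s : Fin r, (S.filter (fun j => σ j = s)).card = R' s) ∧
          LinearIndependent (Polynomial F)
            (fun j : {x // x ∈ S} => G.transpose j.val)))) := by
  exact ⟨matShift_injOn_causal_iff_linearIndependent G, fun r σ R' _ =>
    exists_congr fun S => and_congr_right fun _ => matShift_injOn_causal_iff_linearIndependent G S⟩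
end
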